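/- arXiv:2601.00276 — 2 statements merged into one kernel-verified Lean document; each statement's English description precedes it below -/
import Mathlib

section
/- If Y ∈ ℝ^{N×C}, then the matrix M = Y Yᵀ has rank at most C, and therefore any symmetric PSD matrix K satisfying K M + M K = 2λμ K with λ, μ > 0 has rank at most C. -/
open Matrix

theorem stmt_1 {N C : ℕ} (Y : Matrix (Fin N) (Fin C) ℝ)
    (K : Matrix (Fin N) (Fin N) ℝ) (hK : K.PosSemidef)
    (lam mu : ℝ) (hlam : 0 < lam) (hmu : 0 < mu)
    (hfix : K * (Y * Yᵀ) + (Y * Yᵀ) * K = (2 * lam * mu) • K) :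
    (Y * Yᵀ).rank ≤ C ∧ K.rank ≤ C := by
  set M := Y * Yᵀ with hM
  have hMrank : M.rank ≤ C := by
    calc M.rank ≤ Y.rank := Matrix.rank_mul_le_left Y Yᵀ
    _ ≤ Fintype.card (Fin C) := Matrix.rank_le_card_width Y
    _ = C := Fintype.card_fin C
  refine ⟨hMrank, ?_⟩
  -- ker M ≤ ker K
  have hMsymm : Mᵀ = M := by
    rw [hM, Matrix.transpose_mul, Matrix.transpose_transpose]
  clear hM
  clear_value M
  have hker : LinearMap.ker M.mulVecLin ≤ LinearMap.ker K.mulVecLin := by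
    intro x hx
    simp only [LinearMap.mem_ker, Matrix.mulVecLin_apply] at hx ⊢
    have h1 : (K * M + M * K) *ᵥ x = ((2 * lam * mu) • K) *ᵥ x := by rw [hfix]
    rw [Matrix.add_mulVec, ← Matrix.mulVec_mulVec, ← Matrix.mulVec_mulVec, hx,
      Matrix.mulVec_zero, zero_add, Matrix.smul_mulVec] at h1
    -- h1 : M *ᵥ (K *ᵥ x) = (2 * lam * mu) • K *ᵥ x
    have h2 : x ⬝ᵥ M *ᵥ (K *ᵥ x) = 0 := by
      rw [Matrix.dotProduct_mulVec, ← Matrix.mulVec_transpose, hMsymm, hx,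
        zero_dotProduct]
    rw [h1, dotProduct_smul] at h2
    have hpos : (0:ℝ) < 2 * lam * mu := by positivity
    have h3 : x ⬝ᵥ K *ᵥ x = 0 := by
      have := mul_eq_zero.mp h2
      rcases this with h | h
      · exact absurd h hpos.ne'
      · exact h
    have := (hK.dotProduct_mulVec_zero_iff x).mp (by simpa using h3)
    exact this
  have hK1 := LinearMap.finrank_range_add_finrank_ker K.mulVecLin
  have hM1 := LinearMap.finrank_range_add_finrank_ker M.mulVecLin
  have hle := Submodule.finrank_mono hker
  have hrK : K.rank = Module.finrank ℝ (LinearMap.range K.mulVecLin) := rfl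
  have hrM : M.rank = Module.finrank ℝ (LinearMap.range M.mulVecLin) := rfl
  have hN : Module.finrank ℝ (Fin N → ℝ) = N := by simp
  rw [hN] at hK1 hM1
  omega
end

section
/- For any Z ∈ ℝ^{k×D} with d ≥ min(k, D), the infimum of (1/2)(‖W₁‖_F² + ‖W₂‖_F²) over all factorizations Z = W₂W₁ with W₂ ∈ ℝ^{k×d}, W₁ ∈ ℝ^{d×D} equals the nuclear norm ‖Z‖_*. -/
open Matrix

/-- Squared Frobenius norm of a real matrix. -/
def frobSq {m n : ℕ} (A : Matrix (Fin m) (Fin n) ℝ) : ℝ :=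
  ∑ i, ∑ j, (A i j) ^ 2

/-- Nuclear norm of a real matrix: the sum of its singular values. -/
noncomputable def nuclearNorm {m n : ℕ} (A : Matrix (Fin m) (Fin n) ℝ) : ℝ :=
  ∑ i, Real.sqrt ((show (Aᵀ * A).IsHermitian by
    simpa using Matrix.isHermitian_conjTranspose_mul_self A).eigenvalues i)

/-!
Diagonalise `ZᵀZ = V₀ diag(μ) V₀ᵀ` and keep the eigenvectors with `μⱼ ≠ 0` as the columns of
`V`. Then `Z = U Σ Vᵀ` with `Uᵀ U = Vᵀ V = 1` and `Σ = diag(√μⱼ)`, a compact SVD; the identity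
`Z V Vᵀ = Z` holds because `‖Z V‖_F² = ∑ μⱼ = ‖Z‖_F²`. For any factorization `Z = W₂ W₁`,
`‖Z‖_* = tr(Uᵀ W₂ W₁ V) = ⟨W₂ᵀ U, W₁ V⟩_F ≤ ½ (‖W₂ᵀ U‖_F² + ‖W₁ V‖_F²) ≤ ½ (‖W₁‖_F² + ‖W₂‖_F²)`,
since multiplying by a matrix with orthonormal columns does not increase the Frobenius norm.
The balanced factorization `W₂ = U Σ^{1/2}`, `W₁ = Σ^{1/2} Vᵀ`, padded with zeros to the hidden
dimension `d ≥ rank Z`, attains the bound.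
-/

section Trace

variable {m n ι : Type*} [Fintype m] [Fintype n] [Fintype ι]

lemma Matrix.trace_mul_transpose_self (A : Matrix m n ℝ) :
    trace (A * Aᵀ) = ∑ i, ∑ j, A i j ^ 2 := by
  simp only [trace, diag, mul_apply, transpose_apply, sq]

lemma Matrix.trace_mul_transpose_self_nonneg (A : Matrix m n ℝ) : 0 ≤ trace (A * Aᵀ) := by
  rw [trace_mul_transpose_self]
  positivity

lemma frobSq_eq_trace {k l : ℕ} (A : Matrix (Fin k) (Fin l) ℝ) : frobSq A = trace (A * Aᵀ) :=
  (trace_mul_transpose_self A).symm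

lemma Matrix.two_mul_trace_transpose_mul_le (X Y : Matrix m n ℝ) :
    2 * trace (Xᵀ * Y) ≤ trace (X * Xᵀ) + trace (Y * Yᵀ) := by
  have h := trace_mul_transpose_self_nonneg (X - Y)
  have hYX : trace (Y * Xᵀ) = trace (Xᵀ * Y) := trace_mul_comm _ _
  have hXY : trace (X * Yᵀ) = trace (Xᵀ * Y) := by
    rw [← trace_transpose, transpose_mul, transpose_transpose, trace_mul_comm]
  simp only [transpose_sub, Matrix.sub_mul, Matrix.mul_sub, trace_sub, hYX, hXY] at h
  linarith

lemma Matrix.trace_mul_transpose_add_trace_sub_mul_transpose [DecidableEq ι] {V : Matrix n ι ℝ}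
    (hV : Vᵀ * V = 1) (A : Matrix m n ℝ) :
    trace (A * V * (A * V)ᵀ) + trace ((A - A * V * Vᵀ) * (A - A * V * Vᵀ)ᵀ) =
      trace (A * Aᵀ) := by
  have hproj : A * V * Vᵀ * (A * V * Vᵀ)ᵀ = A * V * (A * V)ᵀ := by
    simp only [transpose_mul, transpose_transpose, Matrix.mul_assoc]
    rw [← Matrix.mul_assoc Vᵀ V, hV, Matrix.one_mul]
  have hleft : A * (A * V * Vᵀ)ᵀ = A * V * (A * V)ᵀ := by
    simp only [transpose_mul, transpose_transpose, Matrix.mul_assoc]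
  have hright : A * V * Vᵀ * Aᵀ = A * V * (A * V)ᵀ := by
    simp only [transpose_mul, Matrix.mul_assoc]
  rw [transpose_sub, Matrix.sub_mul, Matrix.mul_sub, Matrix.mul_sub, hproj, hleft, hright]
  simp only [trace_sub]
  ring

lemma Matrix.trace_mul_mul_transpose_le [DecidableEq ι] {V : Matrix n ι ℝ} (hV : Vᵀ * V = 1)
    (A : Matrix m n ℝ) : trace (A * V * (A * V)ᵀ) ≤ trace (A * Aᵀ) := by
  rw [← trace_mul_transpose_add_trace_sub_mul_transpose hV A]
  linarith [trace_mul_transpose_self_nonneg (A - A * V * Vᵀ)]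

theorem two_mul_trace_le_frobSq_add {k d D : ℕ} [DecidableEq ι] {U : Matrix (Fin k) ι ℝ}
    {V : Matrix (Fin D) ι ℝ} (hU : Uᵀ * U = 1) (hV : Vᵀ * V = 1)
    (W2 : Matrix (Fin k) (Fin d) ℝ) (W1 : Matrix (Fin d) (Fin D) ℝ) :
    2 * trace (Uᵀ * (W2 * W1) * V) ≤ frobSq W1 + frobSq W2 := by
  have hUV : trace (Uᵀ * (W2 * W1) * V) = trace ((W2ᵀ * U)ᵀ * (W1 * V)) := by
    simp only [transpose_mul, transpose_transpose, Matrix.mul_assoc]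
  have hW2 : trace (W2ᵀ * U * (W2ᵀ * U)ᵀ) ≤ frobSq W2 := by
    rw [frobSq_eq_trace, trace_mul_comm W2]
    simpa using trace_mul_mul_transpose_le hU W2ᵀ
  rw [hUV, frobSq_eq_trace]
  linarith [two_mul_trace_transpose_mul_le (W2ᵀ * U) (W1 * V), trace_mul_mul_transpose_le hV W1]

lemma Matrix.exists_mul_eq_trace_eq {κ : Type*} [Fintype κ] [DecidableEq ι] [DecidableEq κ]
    (f : ι ↪ κ) (A : Matrix m ι ℝ) (B : Matrix ι n ℝ) :
    ∃ (W2 : Matrix m κ ℝ) (W1 : Matrix κ n ℝ), W2 * W1 = A * B ∧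
      trace (W2 * W2ᵀ) = trace (A * Aᵀ) ∧ trace (W1 * W1ᵀ) = trace (B * Bᵀ) := by
  set P : Matrix ι κ ℝ := (1 : Matrix κ κ ℝ).submatrix f id
  have hP : P * Pᵀ = 1 := by
    rw [transpose_submatrix, transpose_one, ← submatrix_mul _ _ _ _ _ Function.bijective_id,
      Matrix.one_mul, submatrix_one _ f.injective]
  refine ⟨A * P, Pᵀ * B, ?_, ?_, ?_⟩
  · rw [Matrix.mul_assoc, ← Matrix.mul_assoc P, hP, Matrix.one_mul]
  · rw [transpose_mul, Matrix.mul_assoc, ← Matrix.mul_assoc P, hP, Matrix.one_mul]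
  · rw [transpose_mul, transpose_transpose, Matrix.mul_assoc, trace_mul_comm]
    simp only [Matrix.mul_assoc, hP, Matrix.mul_one]

end Trace

namespace Matrix

lemma isHermitian_transpose_mul_self {m n : Type*} [Fintype m] (Z : Matrix m n ℝ) :
    (Zᵀ * Z).IsHermitian := by
  simpa using isHermitian_conjTranspose_mul_self Z

variable {m n : Type*} [Fintype m] [Fintype n] [DecidableEq n] (Z : Matrix m n ℝ)

noncomputable def gramEigenvalues : n → ℝ := (isHermitian_transpose_mul_self Z).eigenvalues

noncomputable def gramEigenvectors : Matrix n n ℝ :=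
  (isHermitian_transpose_mul_self Z).eigenvectorUnitary

abbrev SingularIndex : Type _ := {j : n // gramEigenvalues Z j ≠ 0}

noncomputable def singularValue (j : n) : ℝ := √(gramEigenvalues Z j)

noncomputable def rightSingularVectors : Matrix n (SingularIndex Z) ℝ :=
  (gramEigenvectors Z).submatrix id Subtype.val

noncomputable def leftSingularVectors : Matrix m (SingularIndex Z) ℝ :=
  Z * rightSingularVectors Z * diagonal fun j : SingularIndex Z => (singularValue Z j)⁻¹

lemma gramEigenvectors_transpose_mul_self : (gramEigenvectors Z)ᵀ * gramEigenvectors Z = 1 := by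
  simpa [gramEigenvectors, star_eq_conjTranspose] using
    Unitary.coe_star_mul_self (isHermitian_transpose_mul_self Z).eigenvectorUnitary

lemma gramEigenvectors_transpose_mul_mul :
    (gramEigenvectors Z)ᵀ * (Zᵀ * Z) * gramEigenvectors Z = diagonal (gramEigenvalues Z) := by
  simpa [gramEigenvectors, gramEigenvalues, Unitary.conjStarAlgAut_apply, star_eq_conjTranspose,
    RCLike.ofReal_real_eq_id] using
    (isHermitian_transpose_mul_self Z).conjStarAlgAut_star_eigenvectorUnitary

lemma gramEigenvalues_nonneg (j : n) : 0 ≤ gramEigenvalues Z j :=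
  (posSemidef_conjTranspose_mul_self Z).eigenvalues_nonneg j

lemma rightSingularVectors_transpose_mul_mul (M : Matrix n n ℝ) :
    (rightSingularVectors Z)ᵀ * M * rightSingularVectors Z =
      ((gramEigenvectors Z)ᵀ * M * gramEigenvectors Z).submatrix Subtype.val Subtype.val := by
  ext i j; simp [rightSingularVectors, mul_apply]

lemma rightSingularVectors_transpose_mul_self :
    (rightSingularVectors Z)ᵀ * rightSingularVectors Z = 1 := by
  simpa [gramEigenvectors_transpose_mul_self, submatrix_one _ Subtype.val_injective] using
    rightSingularVectors_transpose_mul_mul Z 1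

lemma rightSingularVectors_transpose_mul_gram_mul :
    (rightSingularVectors Z)ᵀ * (Zᵀ * Z) * rightSingularVectors Z =
      diagonal fun j : SingularIndex Z => gramEigenvalues Z j := by
  rw [rightSingularVectors_transpose_mul_mul, gramEigenvectors_transpose_mul_mul,
    submatrix_diagonal _ _ Subtype.val_injective]
  rfl

lemma sq_singularValue (j : n) : singularValue Z j ^ 2 = gramEigenvalues Z j :=
  Real.sq_sqrt (gramEigenvalues_nonneg Z j)

lemma singularValue_ne_zero (j : SingularIndex Z) : singularValue Z j ≠ 0 := by
  intro h
  exact j.2 (by rw [← sq_singularValue, h, sq, zero_mul])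

lemma sum_singularIndex {g : n → ℝ} (hg : ∀ j, gramEigenvalues Z j = 0 → g j = 0) :
    ∑ j : SingularIndex Z, g j = ∑ j, g j := by
  rw [← Fintype.sum_subtype_add_sum_subtype (fun j => gramEigenvalues Z j ≠ 0) g,
    Fintype.sum_eq_zero (fun j : {j // ¬gramEigenvalues Z j ≠ 0} => g j)
      fun j => hg j (not_ne_iff.mp j.2), add_zero]

lemma leftSingularVectors_transpose_mul_self :
    (leftSingularVectors Z)ᵀ * leftSingularVectors Z = 1 := by
  set Dinv := diagonal fun j : SingularIndex Z => (singularValue Z j)⁻¹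
  calc (leftSingularVectors Z)ᵀ * leftSingularVectors Z
      = Dinv * ((rightSingularVectors Z)ᵀ * (Zᵀ * Z) * rightSingularVectors Z) * Dinv := by
        simp only [leftSingularVectors, Dinv, transpose_mul, diagonal_transpose, Matrix.mul_assoc]
    _ = 1 := by
        rw [rightSingularVectors_transpose_mul_gram_mul, diagonal_mul_diagonal,
          diagonal_mul_diagonal, ← diagonal_one]
        congr 1
        funext j
        have := singularValue_ne_zero Z j
        rw [← sq_singularValue]
        field_simp

lemma leftSingularVectors_mul_diagonal :
    leftSingularVectors Z * diagonal (fun j : SingularIndex Z => singularValue Z j) =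
      Z * rightSingularVectors Z := by
  have hinv :
      (diagonal fun j : SingularIndex Z => (singularValue Z j)⁻¹ * singularValue Z j) = 1 := by
    rw [← diagonal_one]
    congr 1
    funext j
    exact inv_mul_cancel₀ (singularValue_ne_zero Z j)
  rw [leftSingularVectors, Matrix.mul_assoc, diagonal_mul_diagonal, hinv, Matrix.mul_one]

lemma mul_rightSingularVectors_mul_transpose :
    Z * rightSingularVectors Z * (rightSingularVectors Z)ᵀ = Z := by
  have hcaptured : trace (Z * rightSingularVectors Z * (Z * rightSingularVectors Z)ᵀ) =
      trace (Z * Zᵀ) := by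
    rw [trace_mul_comm, transpose_mul, Matrix.mul_assoc, ← Matrix.mul_assoc Zᵀ,
      ← Matrix.mul_assoc, rightSingularVectors_transpose_mul_gram_mul, trace_diagonal,
      sum_singularIndex Z fun _ h => h, trace_mul_comm,
      (isHermitian_transpose_mul_self Z).trace_eq_sum_eigenvalues]
    rfl
  have hresidual := trace_mul_transpose_add_trace_sub_mul_transpose
    (rightSingularVectors_transpose_mul_self Z) Z
  rw [hcaptured, add_eq_left] at hresidual
  exact (sub_eq_zero.mp (trace_mul_conjTranspose_self_eq_zero_iff.mp hresidual)).symm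

theorem leftSingularVectors_mul_diagonal_mul_transpose :
    leftSingularVectors Z * diagonal (fun j : SingularIndex Z => singularValue Z j) *
      (rightSingularVectors Z)ᵀ = Z := by
  rw [leftSingularVectors_mul_diagonal, mul_rightSingularVectors_mul_transpose]

lemma card_singularIndex : Fintype.card (SingularIndex Z) = Z.rank := by
  rw [← rank_transpose_mul_self]
  exact ((isHermitian_transpose_mul_self Z).rank_eq_card_non_zero_eigs).symm

end Matrix

section Factorization

variable {k D : ℕ} (Z : Matrix (Fin k) (Fin D) ℝ)

lemma nuclearNorm_eq_sum_singularIndex :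
    nuclearNorm Z = ∑ j : Z.SingularIndex, Z.singularValue j :=
  (Z.sum_singularIndex (g := Z.singularValue) fun j hj => by
    rw [singularValue, hj, Real.sqrt_zero]).symm

lemma trace_leftSingularVectors_transpose_mul_mul :
    trace ((Z.leftSingularVectors)ᵀ * Z * Z.rightSingularVectors) = nuclearNorm Z := by
  calc trace ((Z.leftSingularVectors)ᵀ * Z * Z.rightSingularVectors)
      = trace ((Z.leftSingularVectors)ᵀ * (Z.leftSingularVectors *
          diagonal (fun j : Z.SingularIndex => Z.singularValue j) * (Z.rightSingularVectors)ᵀ) *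
          Z.rightSingularVectors) := by
        rw [leftSingularVectors_mul_diagonal_mul_transpose]
    _ = trace (diagonal fun j : Z.SingularIndex => Z.singularValue j) := by
        simp only [Matrix.mul_assoc, rightSingularVectors_transpose_mul_self, Matrix.mul_one]
        rw [← Matrix.mul_assoc, leftSingularVectors_transpose_mul_self, Matrix.one_mul]
    _ = nuclearNorm Z := by rw [trace_diagonal, nuclearNorm_eq_sum_singularIndex]

theorem nuclearNorm_le_of_eq_mul {d : ℕ} {W2 : Matrix (Fin k) (Fin d) ℝ}
    {W1 : Matrix (Fin d) (Fin D) ℝ} (h : Z = W2 * W1) :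
    nuclearNorm Z ≤ 1 / 2 * (frobSq W1 + frobSq W2) := by
  have := two_mul_trace_le_frobSq_add Z.leftSingularVectors_transpose_mul_self
    Z.rightSingularVectors_transpose_mul_self W2 W1
  rw [← h, trace_leftSingularVectors_transpose_mul_mul] at this
  linarith

theorem exists_balanced_factorization {d : ℕ} (hd : Z.rank ≤ d) :
    ∃ (W2 : Matrix (Fin k) (Fin d) ℝ) (W1 : Matrix (Fin d) (Fin D) ℝ),
      Z = W2 * W1 ∧ frobSq W1 = nuclearNorm Z ∧ frobSq W2 = nuclearNorm Z := by
  obtain ⟨f⟩ : Nonempty (Z.SingularIndex ↪ Fin d) :=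
    Function.Embedding.nonempty_of_card_le (by rwa [Fintype.card_fin, card_singularIndex])
  set U := Z.leftSingularVectors
  set V := Z.rightSingularVectors
  have hU : Uᵀ * U = 1 := Z.leftSingularVectors_transpose_mul_self
  have hV : Vᵀ * V = 1 := Z.rightSingularVectors_transpose_mul_self
  set S := diagonal fun j : Z.SingularIndex => √(Z.singularValue j)
  have hSt : Sᵀ = S := diagonal_transpose _
  have hSS : S * S = diagonal fun j : Z.SingularIndex => Z.singularValue j := by
    rw [diagonal_mul_diagonal]
    congr 1
    funext j
    exact Real.mul_self_sqrt (Real.sqrt_nonneg _)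
  have hsvd : U * (S * S) * Vᵀ = Z := by
    rw [hSS]
    exact Z.leftSingularVectors_mul_diagonal_mul_transpose
  have htrace : trace (S * S) = nuclearNorm Z := by
    rw [hSS, trace_diagonal, nuclearNorm_eq_sum_singularIndex]
  obtain ⟨W2, W1, hmul, h2, h1⟩ := exists_mul_eq_trace_eq f (U * S) (S * Vᵀ)
  refine ⟨W2, W1, ?_, ?_, ?_⟩
  · rw [hmul, ← Matrix.mul_assoc, Matrix.mul_assoc U S S, hsvd]
  · rw [frobSq_eq_trace, h1, ← htrace, transpose_mul, transpose_transpose, hSt]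
    simp only [Matrix.mul_assoc]
    rw [← Matrix.mul_assoc Vᵀ, hV, Matrix.one_mul]
  · rw [frobSq_eq_trace, h2, ← htrace, transpose_mul, hSt, trace_mul_comm]
    simp only [Matrix.mul_assoc]
    rw [← Matrix.mul_assoc Uᵀ, hU, Matrix.one_mul]

end Factorization

/-- Variational characterization of the nuclear norm via balanced two-layer
factorizations with a sufficiently large hidden dimension. -/
theorem stmt_8 {k D d : ℕ} (hd : min k D ≤ d) (Z : Matrix (Fin k) (Fin D) ℝ) :
    sInf {c : ℝ | ∃ (W2 : Matrix (Fin k) (Fin d) ℝ) (W1 : Matrix (Fin d) (Fin D) ℝ),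
        Z = W2 * W1 ∧ c = (1 / 2) * (frobSq W1 + frobSq W2)} = nuclearNorm Z := by
  have hrank : Z.rank ≤ d :=
    (le_min (by simpa using Z.rank_le_card_height) (by simpa using Z.rank_le_card_width)).trans hd
  obtain ⟨W2, W1, hZ, h1, h2⟩ := exists_balanced_factorization Z hrank
  refine IsLeast.csInf_eq ⟨⟨W2, W1, hZ, by rw [h1, h2]; ring⟩, ?_⟩
  rintro c ⟨W2, W1, hZ, rfl⟩
  exact nuclearNorm_le_of_eq_mul Z hZ
end
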